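/- Every undirected door can simulate a diode: wiring a path through the opening tunnel, then through the traverse tunnel, then through the closing tunnel yields a system with two external locations in which the agent can traverse from the first external location to the second (by opening, traversing, and closing the door) but can never traverse from the second to the first (entering that way closes the traverse tunnel before it can be used). -/

import Mathlib

/-- A 1-player gadget: a finite set of states, a finite set of locations,
and a set of traversals between state–location pairs. -/
structure Gadget where
  State : Type
  Loc : Type
  stateFin : Fintype State
  locFin : Fintype Loc
  trav : (State × Loc) → (State × Loc) → Prop

open Classical in
/-- Update the state of one gadget instance in a global state. -/
noncomputable def updState {ι St : Type} (σg : ι → St) (i : ι) (s : St) : ι → St :=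
  fun j => if j = i then s else σg j

/-- A system of copies of the gadget `G`: a finite collection of instances together with
symmetric connections (pairings of locations) along which the agent moves freely. -/
structure System (G : Gadget) where
  ι : Type
  instFin : Fintype ι
  conn : (ι × G.Loc) → (ι × G.Loc) → Prop
  conn_symm : ∀ x y, conn x y → conn y x

/-- A single move of the agent in a system: a traversal inside one instance
(changing only that instance's state), or a free move along a connection. -/
inductive SysStep (G : Gadget) (S : System G) :
    ((S.ι → G.State) × (S.ι × G.Loc)) → ((S.ι → G.State) × (S.ι × G.Loc)) → Prop
  | trav {σg : S.ι → G.State} {i : S.ι} {a b : G.Loc} {s' : G.State} :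
      G.trav (σg i, a) (s', b) →
      SysStep G S (σg, (i, a)) (updState σg i s', (i, b))
  | move {σg : S.ι → G.State} {x y : S.ι × G.Loc} :
      S.conn x y → SysStep G S (σg, x) (σg, y)

/-- `Simulates G' G` : there is a system of copies of `G'`, with external locations
identified (injectively) with the locations of `G` and an injective encoding of the
states of `G` as global states, whose reachability behavior between external locations
in encoded global states is exactly the transitive closure of `G`. -/
def Simulates (G' G : Gadget) : Prop :=
  ∃ S : System G', ∃ ext : G.Loc → S.ι × G'.Loc, ∃ enc : G.State → (S.ι → G'.State),
    Function.Injective ext ∧ Function.Injective enc ∧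
    ∀ s s' a b,
      Relation.ReflTransGen (SysStep G' S) (enc s, ext a) (enc s', ext b) ↔
      Relation.ReflTransGen G.trav (s, a) (s', b)

/-! ### Doors.  State `true` = open, `false` = closed.
A direction flag `true` means the corresponding tunnel is directed,
`false` that it is undirected. -/

/-- Locations of a door with an opening tunnel: entrance/exit of the opening (`O`),
traverse (`T`) and closing (`C`) tunnels. -/
inductive DoorLoc | O0 | O1 | T0 | T1 | C0 | C1
deriving DecidableEq

instance : Fintype DoorLoc :=
  Fintype.ofList [DoorLoc.O0, DoorLoc.O1, DoorLoc.T0, DoorLoc.T1, DoorLoc.C0, DoorLoc.C1] (by intro x; cases x <;> simp)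

/-- Traversals of a door with an opening tunnel; `dO`, `dT`, `dC` record whether the
opening, traverse, closing tunnels are directed. -/
def doorTrav (dO dT dC : Bool) : (Bool × DoorLoc) → (Bool × DoorLoc) → Prop := fun x y =>
  (x.2 = DoorLoc.O0 ∧ y = (true, DoorLoc.O1)) ∨
  (dO = false ∧ x.2 = DoorLoc.O1 ∧ y = (true, DoorLoc.O0)) ∨
  (x.1 = true ∧ x.2 = DoorLoc.T0 ∧ y = (true, DoorLoc.T1)) ∨
  (dT = false ∧ x.1 = true ∧ x.2 = DoorLoc.T1 ∧ y = (true, DoorLoc.T0)) ∨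
  (x.2 = DoorLoc.C0 ∧ y = (false, DoorLoc.C1)) ∨
  (dC = false ∧ x.2 = DoorLoc.C1 ∧ y = (false, DoorLoc.C0))

/-- The door with an opening tunnel (an open-required door). -/
def doorGadget (dO dT dC : Bool) : Gadget :=
  ⟨Bool, DoorLoc, inferInstance, inferInstance, doorTrav dO dT dC⟩

/-- Locations of an open-optional door: opening port `O` plus traverse and closing tunnels. -/
inductive ODoorLoc | O | T0 | T1 | C0 | C1
deriving DecidableEq

instance : Fintype ODoorLoc :=
  Fintype.ofList [ODoorLoc.O, ODoorLoc.T0, ODoorLoc.T1, ODoorLoc.C0, ODoorLoc.C1] (by intro x; cases x <;> simp)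

/-- Traversals of an open-optional door: a visit to the opening port `O` sets the state
to open; `dT`, `dC` record whether the traverse and closing tunnels are directed. -/
def openOptDoorTrav (dT dC : Bool) : (Bool × ODoorLoc) → (Bool × ODoorLoc) → Prop := fun x y =>
  (x.2 = ODoorLoc.O ∧ y = (true, ODoorLoc.O)) ∨
  (x.1 = true ∧ x.2 = ODoorLoc.T0 ∧ y = (true, ODoorLoc.T1)) ∨
  (dT = false ∧ x.1 = true ∧ x.2 = ODoorLoc.T1 ∧ y = (true, ODoorLoc.T0)) ∨
  (x.2 = ODoorLoc.C0 ∧ y = (false, ODoorLoc.C1)) ∨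
  (dC = false ∧ x.2 = ODoorLoc.C1 ∧ y = (false, ODoorLoc.C0))

/-- The open-optional door. -/
def openOptDoorGadget (dT dC : Bool) : Gadget :=
  ⟨Bool, ODoorLoc, inferInstance, inferInstance, openOptDoorTrav dT dC⟩

/-- A diode: a 1-state gadget with one always-traversable directed tunnel. -/
inductive DiodeLoc | inp | out
deriving DecidableEq

instance : Fintype DiodeLoc :=
  Fintype.ofList [DiodeLoc.inp, DiodeLoc.out] (by intro x; cases x <;> simp)

def diode : Gadget :=
  ⟨Unit, DiodeLoc, inferInstance, inferInstance,
    fun x y => x.2 = DiodeLoc.inp ∧ y.2 = DiodeLoc.out⟩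

/-- Locations of an open-required normal self-closing door. -/
inductive SCDLoc | O0 | O1 | T0 | T1
deriving DecidableEq

instance : Fintype SCDLoc :=
  Fintype.ofList [SCDLoc.O0, SCDLoc.O1, SCDLoc.T0, SCDLoc.T1] (by intro x; cases x <;> simp)

/-- Open-required normal self-closing door: opening tunnel `O` (always traversable, sets
the state to open), self-closing tunnel `T` (traversable exactly when open, sets closed). -/
def nSCDTrav (dO dT : Bool) : (Bool × SCDLoc) → (Bool × SCDLoc) → Prop := fun x y =>
  (x.2 = SCDLoc.O0 ∧ y = (true, SCDLoc.O1)) ∨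
  (dO = false ∧ x.2 = SCDLoc.O1 ∧ y = (true, SCDLoc.O0)) ∨
  (x.1 = true ∧ x.2 = SCDLoc.T0 ∧ y = (false, SCDLoc.T1)) ∨
  (dT = false ∧ x.1 = true ∧ x.2 = SCDLoc.T1 ∧ y = (false, SCDLoc.T0))

def nSCD (dO dT : Bool) : Gadget :=
  ⟨Bool, SCDLoc, inferInstance, inferInstance, nSCDTrav dO dT⟩

/-- Locations of an open-optional normal self-closing door. -/
inductive OOSCDLoc | O | T0 | T1
deriving DecidableEq

instance : Fintype OOSCDLoc :=
  Fintype.ofList [OOSCDLoc.O, OOSCDLoc.T0, OOSCDLoc.T1] (by intro x; cases x <;> simp)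

/-- Open-optional normal self-closing door: opening port `O` (visit sets the state to
open), self-closing tunnel `T` (traversable exactly when open, sets the state closed). -/
def ooSCDTrav (dT : Bool) : (Bool × OOSCDLoc) → (Bool × OOSCDLoc) → Prop := fun x y =>
  (x.2 = OOSCDLoc.O ∧ y = (true, OOSCDLoc.O)) ∨
  (x.1 = true ∧ x.2 = OOSCDLoc.T0 ∧ y = (false, OOSCDLoc.T1)) ∨
  (dT = false ∧ x.1 = true ∧ x.2 = OOSCDLoc.T1 ∧ y = (false, OOSCDLoc.T0))

def ooSCD (dT : Bool) : Gadget :=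
  ⟨Bool, OOSCDLoc, inferInstance, inferInstance, ooSCDTrav dT⟩

/-- Locations of a symmetric self-closing door. -/
inductive SymSCDLoc | A0 | A1 | B0 | B1
deriving DecidableEq

instance : Fintype SymSCDLoc :=
  Fintype.ofList [SymSCDLoc.A0, SymSCDLoc.A1, SymSCDLoc.B0, SymSCDLoc.B1] (by intro x; cases x <;> simp)

/-- Symmetric self-closing door: self-opening tunnel `A` (traversable exactly when closed,
sets the state open), self-closing tunnel `B` (traversable exactly when open, sets closed). -/
def symSCDTrav (dA dB : Bool) : (Bool × SymSCDLoc) → (Bool × SymSCDLoc) → Prop := fun x y =>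
  (x.1 = false ∧ x.2 = SymSCDLoc.A0 ∧ y = (true, SymSCDLoc.A1)) ∨
  (dA = false ∧ x.1 = false ∧ x.2 = SymSCDLoc.A1 ∧ y = (true, SymSCDLoc.A0)) ∨
  (x.1 = true ∧ x.2 = SymSCDLoc.B0 ∧ y = (false, SymSCDLoc.B1)) ∨
  (dB = false ∧ x.1 = true ∧ x.2 = SymSCDLoc.B1 ∧ y = (false, SymSCDLoc.B0))

def symSCD (dA dB : Bool) : Gadget :=
  ⟨Bool, SymSCDLoc, inferInstance, inferInstance, symSCDTrav dA dB⟩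

/-! The door's opening exit is wired to its traverse entrance and its traverse exit to its
closing entrance. Entering at `O0` the agent opens, traverses and closes the door, reaching `C1`
with the door closed again. Entering at `C1` with the door closed, the door stays closed and the
agent stays among `T1`, `C0`, `C1`: the only moves there are the closing tunnel and the wire
`T1`–`C0`, while the traverse tunnel back towards `O1` needs an open door. -/

def doorDiodeSys : System (doorGadget false false false) where
  ι := Unit
  instFin := inferInstance
  conn x y :=
    (x.2 = DoorLoc.O1 ∧ y.2 = DoorLoc.T0) ∨ (x.2 = DoorLoc.T0 ∧ y.2 = DoorLoc.O1) ∨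
    (x.2 = DoorLoc.T1 ∧ y.2 = DoorLoc.C0) ∨ (x.2 = DoorLoc.C0 ∧ y.2 = DoorLoc.T1)
  conn_symm := by tauto

def doorDiodeExt : DiodeLoc → Unit × DoorLoc
  | DiodeLoc.inp => ((), DoorLoc.O0)
  | DiodeLoc.out => ((), DoorLoc.C1)

theorem doorDiodeExt_injective : Function.Injective doorDiodeExt := by
  rintro (_ | _) (_ | _) h <;> first | rfl | cases h

theorem updState_of_subsingleton {ι St : Type} [Subsingleton ι] (σg : ι → St) (i : ι) (s : St) :
    updState σg i s = fun _ => s := by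
  funext j
  simp [updState, Subsingleton.elim j i]

local notation "DoorStep" => SysStep (doorGadget false false false) doorDiodeSys

theorem doorDiodeSys_trav (s s' : Bool) (a b : DoorLoc)
    (h : doorTrav false false false (s, a) (s', b)) :
    DoorStep (fun _ => s, ((), a)) (fun _ => s', ((), b)) :=
  updState_of_subsingleton (ι := Unit) (fun _ => s) () s' ▸
    SysStep.trav (S := doorDiodeSys) (σg := fun _ => s) (i := ()) h

theorem doorDiodeSys_move (s : Bool) (a b : DoorLoc) (h : doorDiodeSys.conn ((), a) ((), b)) :
    DoorStep (fun _ => s, ((), a)) (fun _ => s, ((), b)) :=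
  .move h

theorem doorDiodeSys_open_traverse_close :
    Relation.ReflTransGen DoorStep
      (fun _ => false, ((), DoorLoc.O0)) (fun _ => false, ((), DoorLoc.C1)) :=
  .head (doorDiodeSys_trav false true .O0 .O1 (by simp [doorTrav])) <|
  .head (doorDiodeSys_move true .O1 .T0 (.inl ⟨rfl, rfl⟩)) <|
  .head (doorDiodeSys_trav true true .T0 .T1 (by simp [doorTrav])) <|
  .head (doorDiodeSys_move true .T1 .C0 (.inr (.inr (.inl ⟨rfl, rfl⟩)))) <|
  .single (doorDiodeSys_trav true false .C0 .C1 (by simp [doorTrav]))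

def DoorLoc.pastTraverse : Set DoorLoc := {DoorLoc.T1, DoorLoc.C0, DoorLoc.C1}

theorem doorTrav_pastTraverse {dO dT dC : Bool} {a b : DoorLoc} {s' : Bool}
    (ha : a ∈ DoorLoc.pastTraverse) (h : doorTrav dO dT dC (false, a) (s', b)) :
    s' = false ∧ b ∈ DoorLoc.pastTraverse := by
  simp only [DoorLoc.pastTraverse, Set.mem_insert_iff, Set.mem_singleton_iff] at ha ⊢
  simp only [doorTrav, Prod.mk.injEq] at h
  grind

def ClosedPastTraverse (c : (Unit → Bool) × (Unit × DoorLoc)) : Prop :=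
  c.1 () = false ∧ c.2.2 ∈ DoorLoc.pastTraverse

theorem ClosedPastTraverse.step {σ σ' x y} (hc : ClosedPastTraverse (σ, x))
    (h : DoorStep (σ, x) (σ', y)) : ClosedPastTraverse (σ', y) := by
  obtain ⟨hclosed, hpast⟩ := hc
  cases h with
  | @trav _ i a b s' ht =>
    cases i
    change σ () = false at hclosed
    change doorTrav false false false (σ (), a) (s', b) at ht
    rw [hclosed] at ht
    obtain ⟨rfl, hb⟩ := doorTrav_pastTraverse hpast ht
    exact ⟨if_pos rfl, hb⟩
  | move hconn =>
    refine ⟨hclosed, ?_⟩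
    simp only [doorDiodeSys] at hconn
    simp only [DoorLoc.pastTraverse, Set.mem_insert_iff, Set.mem_singleton_iff] at hpast ⊢
    grind

theorem ClosedPastTraverse.reflTransGen {c d} (hc : ClosedPastTraverse c)
    (h : Relation.ReflTransGen DoorStep c d) : ClosedPastTraverse d := by
  induction h with
  | refl => exact hc
  | tail _ hstep ih => exact ih.step hstep

theorem doorDiodeSys_not_reach_inp_from_out :
    ¬ Relation.ReflTransGen DoorStep
      (fun _ => false, ((), DoorLoc.C1)) (fun _ => false, ((), DoorLoc.O0)) := fun h => by
  simpa [ClosedPastTraverse, DoorLoc.pastTraverse] using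
    ClosedPastTraverse.reflTransGen (by simp [ClosedPastTraverse, DoorLoc.pastTraverse]) h

theorem diode_not_reach_inp_from_out (s s' : diode.State) :
    ¬ Relation.ReflTransGen diode.trav (s, DiodeLoc.out) (s', DiodeLoc.inp) := by
  rw [Relation.reflTransGen_iff_eq (fun _ h => by cases h.1)]
  nofun

/-- Every undirected door can simulate a diode. -/
theorem undirected_door_simulates_diode :
    Simulates (doorGadget false false false) diode := by
  refine ⟨doorDiodeSys, doorDiodeExt, fun _ _ => false, doorDiodeExt_injective,
    fun _ _ _ => rfl, ?_⟩
  rintro ⟨⟩ ⟨⟩ (_ | _) (_ | _)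
  · exact iff_of_true .refl .refl
  · exact iff_of_true doorDiodeSys_open_traverse_close (.single ⟨rfl, rfl⟩)
  · exact iff_of_false doorDiodeSys_not_reach_inp_from_out (diode_not_reach_inp_from_out _ _)
  · exact iff_of_true .refl .refl
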